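/- arXiv:2308.04993 — 2 statements merged into one kernel-verified Lean document; each statement's English description precedes it below -/
import Mathlib

section
/- For every integer k ≥ 1 and every τ in the upper half-plane satisfying the stated nonvanishing assumption, the series defining the twisted Weierstrass function P_k[θ,φ](z,τ) converges absolutely for every z ∈ ℂ with |q_τ| < |q_z| < 1, the convergence is uniform on every compact subset of {z ∈ ℂ : |q_τ| < |q_z| < 1}, and consequently z ↦ P_k[θ,φ](z,τ) is holomorphic on that region. -/
open Complex Filter

/-- `qpow w n = e^{2πi n w}`, i.e. `q_w^n` for a real exponent `n`. -/
noncomputable def qpow (w : ℂ) (n : ℝ) : ℂ := Complex.exp (2 * Real.pi * Complex.I * n * w)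

/-- `qq w = e^{2πi w} = q_w`. -/
noncomputable def qq (w : ℂ) : ℂ := Complex.exp (2 * Real.pi * Complex.I * w)

/-- The region `|q_τ| < |q_z| < 1`. -/
def Reg (τ z : ℂ) : Prop := ‖qq τ‖ < ‖qq z‖ ∧ ‖qq z‖ < 1

/-- The `n = λ + m` term of the series defining the twisted Weierstrass function
`P_k[θ,φ](z,τ)`, where the term is omitted when `(θ,φ) = (1,1)` (i.e. `λ = 0` and
`θ = 1`) and `n = 0`. -/
noncomputable def Pterm (k : ℕ) (lam : ℝ) (θ : ℂ) (τ z : ℂ) (m : ℤ) : ℂ :=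
  if lam = 0 ∧ θ = 1 ∧ m = 0 then 0
  else ((lam + (m : ℝ) : ℝ) : ℂ) ^ (k - 1) * qpow z (lam + (m : ℝ)) /
    (1 - θ⁻¹ * qpow τ (lam + (m : ℝ)))

/-- The twisted Weierstrass function
`P_k[θ,φ](z,τ) = ((−2πi)^k/(k−1)!) Σ'_{n ∈ λ+ℤ} n^{k−1} q_z^n/(1 − θ⁻¹ q_τ^n)`. -/
noncomputable def twP (k : ℕ) (lam : ℝ) (θ : ℂ) (τ z : ℂ) : ℂ :=
  ((-(2 * Real.pi * Complex.I)) ^ k / (Nat.factorial (k - 1) : ℂ)) *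
    ∑' m : ℤ, Pterm k lam θ τ z m

/-! Write `n = λ + m` and `q = |q_τ|`. On the annulus `r₀ ≤ |q_z| ≤ r₁` the `m`-th term is at most
`|n|^{k-1} (r₀^n + r₁^n) / |1 - θ⁻¹ q_τ^n|`. As `n → +∞` the denominator tends to `1` and the
`r₁^n` part decays geometrically; as `n → -∞` the denominator grows like `|θ|⁻¹ q^n`, so the
`r₀^n` part decays like `(q / r₀)^{|n|}`. Every compact subset of the region lies in such an
annulus with `q < r₀ ≤ r₁ < 1`, so the Weierstrass M-test gives uniform convergence there, and
holomorphy follows because locally uniform limits of holomorphic functions are holomorphic. -/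

open Asymptotics Topology

lemma norm_qq_pos (w : ℂ) : 0 < ‖qq w‖ :=
  norm_pos_iff.2 (Complex.exp_ne_zero _)

lemma norm_qpow (w : ℂ) (n : ℝ) : ‖qpow w n‖ = ‖qq w‖ ^ n := by
  rw [qpow, qq, Complex.norm_exp, Complex.norm_exp, ← Real.exp_mul]
  congr 1
  simp [Complex.mul_re, mul_comm, mul_left_comm]

lemma qpow_mul_qpow_neg (w : ℂ) (n : ℝ) : qpow w n * qpow w (-n) = 1 := by
  rw [qpow, qpow, ← Complex.exp_add]
  push_cast
  ring_nf
  exact Complex.exp_zero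

lemma norm_one_sub_mul_qpow (c w : ℂ) (n : ℝ) :
    ‖1 - c * qpow w n‖ = ‖qq w‖ ^ n * ‖qpow w (-n) - c‖ := by
  rw [← norm_qpow, ← norm_mul, mul_sub, qpow_mul_qpow_neg, mul_comm (qpow w n)]

lemma tendsto_qpow_add_natCast {w : ℂ} (hw : ‖qq w‖ < 1) (a : ℝ) :
    Tendsto (fun n : ℕ => qpow w (a + n)) atTop (𝓝 0) := by
  rw [tendsto_zero_iff_norm_tendsto_zero]
  simp_rw [norm_qpow, Real.rpow_add (norm_qq_pos w), Real.rpow_natCast]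
  simpa using (tendsto_pow_atTop_nhds_zero_of_lt_one (norm_nonneg _) hw).const_mul (‖qq w‖ ^ a)

lemma isBigO_abs_add_natCast_pow (a : ℝ) (d : ℕ) :
    (fun n : ℕ => |a + n| ^ d) =O[atTop] fun n => (n : ℝ) ^ d := by
  have h : (fun n : ℕ => a + n) =O[atTop] fun n => (n : ℝ) := by
    refine IsBigO.of_bound (|a| + 1) ?_
    filter_upwards [eventually_ge_atTop 1] with n hn
    have hn' : (1 : ℝ) ≤ n := by exact_mod_cast hn
    simp only [Real.norm_eq_abs, Nat.abs_cast]
    calc |a + n| ≤ |a| + n := (abs_add_le _ _).trans (by simp)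
      _ ≤ (|a| + 1) * n := by nlinarith [abs_nonneg a]
  simpa using (h.pow d).norm_left

lemma summable_abs_add_natCast_pow_mul_geometric_mul (a C : ℝ) (d : ℕ) {ρ L : ℝ}
    (hρ0 : 0 ≤ ρ) (hρ1 : ρ < 1) {g : ℕ → ℝ} (hg : Tendsto g atTop (𝓝 L)) :
    Summable fun n : ℕ => |a + n| ^ d * (C * ρ ^ n) * g n := by
  have hgeom : Summable fun n : ℕ => (n : ℝ) ^ d * ρ ^ n * 1 := by
    simpa using summable_pow_mul_geometric_of_norm_lt_one d
      (by rwa [Real.norm_eq_abs, abs_of_nonneg hρ0])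
  exact summable_of_isBigO_nat hgeom <|
    ((isBigO_abs_add_natCast_pow a d).mul ((isBigO_refl _ _).const_mul_left C)).mul
      (hg.isBigO_one ℝ)

noncomputable def PtermBound (k : ℕ) (lam : ℝ) (θ : ℂ) (τ : ℂ) (r : ℝ) (m : ℤ) : ℝ :=
  |lam + (m : ℝ)| ^ (k - 1) * r ^ (lam + (m : ℝ)) / ‖1 - θ⁻¹ * qpow τ (lam + (m : ℝ))‖

lemma norm_Pterm_le (k : ℕ) (lam : ℝ) (θ τ z : ℂ) (m : ℤ) :
    ‖Pterm k lam θ τ z m‖ ≤ PtermBound k lam θ τ ‖qq z‖ m := by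
  unfold Pterm PtermBound
  split_ifs
  · rw [norm_zero]
    positivity
  · rw [norm_div, norm_mul, norm_pow, Complex.norm_real, Real.norm_eq_abs, norm_qpow]

lemma PtermBound_le_add {k : ℕ} {lam : ℝ} {θ τ : ℂ} {r₀ r₁ s : ℝ} (h₀ : 0 < r₀) (hs₀ : r₀ ≤ s)
    (hs₁ : s ≤ r₁) (m : ℤ) :
    PtermBound k lam θ τ s m ≤ PtermBound k lam θ τ r₀ m + PtermBound k lam θ τ r₁ m := by
  have hs : 0 < s := h₀.trans_le hs₀
  have h₁ : 0 < r₁ := hs.trans_le hs₁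
  unfold PtermBound
  rw [← add_div, ← mul_add]
  gcongr
  rcases le_or_gt 0 (lam + (m : ℝ)) with hx | hx
  · exact (Real.rpow_le_rpow hs.le hs₁ hx).trans (le_add_of_nonneg_left (by positivity))
  · exact (Real.rpow_le_rpow_of_nonpos h₀ hs₀ hx.le).trans
      (le_add_of_nonneg_right (by positivity))

lemma summable_PtermBound (k : ℕ) (lam : ℝ) {θ τ : ℂ} (hθ : θ ≠ 0) {r : ℝ}
    (hτr : ‖qq τ‖ < r) (hr : r < 1) : Summable (PtermBound k lam θ τ r) := by
  set q := ‖qq τ‖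
  have hq : 0 < q := norm_qq_pos τ
  have hr₀ : 0 < r := hq.trans hτr
  have hq₁ : q < 1 := hτr.trans hr
  refine Summable.of_nat_of_neg ?_ ?_
  · have hg : Tendsto (fun n : ℕ => ‖1 - θ⁻¹ * qpow τ (lam + n)‖⁻¹) atTop (𝓝 1) := by
      simpa using ((tendsto_const_nhds.sub
        (tendsto_const_nhds.mul (tendsto_qpow_add_natCast hq₁ lam))).norm).inv₀
          (by simp : ‖(1 : ℂ) - θ⁻¹ * 0‖ ≠ 0)
    refine (summable_abs_add_natCast_pow_mul_geometric_mul lam (r ^ lam) (k - 1) hr₀.le hr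
      hg).congr fun n => ?_
    simp [PtermBound, Real.rpow_add hr₀, div_eq_mul_inv]
  · -- `1 - θ⁻¹ q_τ^n = q_τ^n (q_τ^{-n} - θ⁻¹)`, and `q_τ^{-n} → 0` as `n → -∞`.
    have hg := ((tendsto_qpow_add_natCast hq₁ (-lam)).sub
      (tendsto_const_nhds (x := θ⁻¹))).norm.inv₀ (by simpa : ‖(0 : ℂ) - θ⁻¹‖ ≠ 0)
    refine (summable_abs_add_natCast_pow_mul_geometric_mul (-lam) ((r / q) ^ lam) (k - 1)
      (div_pos hq hr₀).le ((div_lt_one hr₀).2 hτr) hg).congr fun n => ?_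
    have hx : lam + ((-(n : ℤ) : ℤ) : ℝ) = lam - n := by push_cast; ring
    have hratio : r ^ (lam - n) / q ^ (lam - n) = (r / q) ^ lam * (q / r) ^ n := by
      rw [← Real.div_rpow hr₀.le hq.le, Real.rpow_sub (div_pos hr₀ hq), Real.rpow_natCast,
        div_eq_mul_inv, ← inv_pow, inv_div]
    rw [PtermBound, hx, norm_one_sub_mul_qpow, neg_sub, abs_sub_comm, ← hratio,
      show (n : ℝ) - lam = -lam + n by ring]
    ring

lemma continuous_qq : Continuous qq := by
  unfold qq
  fun_prop

lemma isOpen_setOf_Reg (τ : ℂ) : IsOpen {z : ℂ | Reg τ z} :=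
  isOpen_Ioo.preimage continuous_qq.norm

lemma differentiable_Pterm (k : ℕ) (lam : ℝ) (θ τ : ℂ) (m : ℤ) :
    Differentiable ℂ fun z => Pterm k lam θ τ z m := by
  unfold Pterm qpow
  split_ifs <;> fun_prop

lemma exists_summable_bound_Pterm_of_isCompact (k : ℕ) (lam : ℝ) {θ τ : ℂ} (hθ : θ ≠ 0)
    {K : Set ℂ} (hK : K ⊆ {z : ℂ | Reg τ z}) (hKc : IsCompact K) :
    ∃ u : ℤ → ℝ, Summable u ∧ ∀ m, ∀ z ∈ K, ‖Pterm k lam θ τ z m‖ ≤ u m := by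
  rcases K.eq_empty_or_nonempty with rfl | hne
  · exact ⟨0, summable_zero, by simp⟩
  obtain ⟨z₀, hz₀, hmin⟩ := hKc.exists_isMinOn hne continuous_qq.norm.continuousOn
  obtain ⟨z₁, hz₁, hmax⟩ := hKc.exists_isMaxOn hne continuous_qq.norm.continuousOn
  refine ⟨PtermBound k lam θ τ ‖qq z₀‖ + PtermBound k lam θ τ ‖qq z₁‖,
    (summable_PtermBound k lam hθ (hK hz₀).1 ((hmin hz₁).trans_lt (hK hz₁).2)).add
      (summable_PtermBound k lam hθ ((hK hz₀).1.trans_le (hmax hz₀)) (hK hz₁).2),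
    fun m z hz => (norm_Pterm_le k lam θ τ z m).trans ?_⟩
  exact PtermBound_le_add (norm_qq_pos z₀) (hmin hz) (hmax hz) m

theorem twistedWeierstrass_convergence_general
    (k : ℕ) (lam : ℝ) (θ : ℂ) (hθ : θ ≠ 0) (τ : ℂ) :
    (∀ z : ℂ, Reg τ z → Summable (fun m : ℤ => ‖Pterm k lam θ τ z m‖)) ∧
    (∀ K : Set ℂ, K ⊆ {z : ℂ | Reg τ z} → IsCompact K →
      TendstoUniformlyOn (fun (s : Finset ℤ) (z : ℂ) => ∑ m ∈ s, Pterm k lam θ τ z m)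
        (fun z : ℂ => ∑' m : ℤ, Pterm k lam θ τ z m) atTop K) ∧
    DifferentiableOn ℂ (fun z : ℂ => twP k lam θ τ z) {z : ℂ | Reg τ z} := by
  refine ⟨fun z hz => ?_, fun K hK hKc => ?_, ?_⟩
  · exact .of_nonneg_of_le (fun m => norm_nonneg _) (norm_Pterm_le k lam θ τ z)
      (summable_PtermBound k lam hθ hz.1 hz.2)
  · obtain ⟨u, hu, hbound⟩ := exists_summable_bound_Pterm_of_isCompact k lam hθ hK hKc
    exact tendstoUniformlyOn_tsum hu hbound
  · have hsum : SummableLocallyUniformlyOn (fun m z => Pterm k lam θ τ z m) {z | Reg τ z} :=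
      SummableLocallyUniformlyOn_of_locally_bounded (isOpen_setOf_Reg τ)
        fun K hK hKc => exists_summable_bound_Pterm_of_isCompact k lam hθ hK hKc
    exact (hsum.differentiableOn (isOpen_setOf_Reg τ)
      fun m z _ => (differentiable_Pterm k lam θ τ m).differentiableAt).const_mul _

/-- For every integer `k ≥ 1`, `λ ∈ [0,1)`, `θ ≠ 0`, and `τ` in the upper
half-plane such that all denominators `1 − θ⁻¹ q_τ^n` (for terms actually occurring in the
series) are nonzero: the series defining `P_k[θ,φ](z,τ)` converges absolutely for every `z`
with `|q_τ| < |q_z| < 1`, the convergence is uniform on every compact subset of this region,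
and consequently `z ↦ P_k[θ,φ](z,τ)` is holomorphic on that region. -/
theorem twistedWeierstrass_convergence
    (k : ℕ) (hk : 1 ≤ k) (lam : ℝ) (hlam : lam ∈ Set.Ico (0:ℝ) 1)
    (θ : ℂ) (hθ : θ ≠ 0) (τ : ℂ) (hτ : 0 < τ.im)
    (hden : ∀ m : ℤ, ¬(lam = 0 ∧ θ = 1 ∧ m = 0) →
      1 - θ⁻¹ * qpow τ (lam + (m : ℝ)) ≠ 0) :
    (∀ z : ℂ, Reg τ z → Summable (fun m : ℤ => ‖Pterm k lam θ τ z m‖)) ∧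
    (∀ K : Set ℂ, K ⊆ {z : ℂ | Reg τ z} → IsCompact K →
      TendstoUniformlyOn (fun (s : Finset ℤ) (z : ℂ) => ∑ m ∈ s, Pterm k lam θ τ z m)
        (fun z : ℂ => ∑' m : ℤ, Pterm k lam θ τ z m) atTop K) ∧
    DifferentiableOn ℂ (fun z : ℂ => twP k lam θ τ z) {z : ℂ | Reg τ z} :=
  twistedWeierstrass_convergence_general k lam θ hθ τ
end

section
/- For every integer m ≥ 1, every τ ∈ ℍ satisfying the nonvanishing assumption, and every z with |q_τ| < |q_z| < 1: if φ = 1 and θ ≠ 1 then P_m^{θ,φ}(z,τ) = (−1)^m P_m[θ,φ](z,τ) − δ_{1,m} · 2πi/(1 − θ^{-1}) (with δ_{1,m} = 1 if m = 1 and 0 otherwise), while in all other cases P_m^{θ,φ}(z,τ) = (−1)^m P_m[θ,φ](z,τ). -/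
/-!
Each term `q_z^n / (1 - θ⁻¹ q_τ^n)` of `P_1^{θ,φ}` is an exponential in `z`. On a strip
`a ≤ Im z ≤ b` with `0 < a ≤ b < Im τ` these terms are dominated by `C e^{-c|n|}`: for `n → +∞`
because `|q_z^n|` decays, for `n → -∞` because the denominator grows like `|q_τ^n|`. So the series
can be differentiated termwise, and `∂_z^{m-1}` multiplies the `n`-th term by `(2πi n)^{m-1}`,
which is `(-1)^m P_m[θ,φ]` term by term. The only discrepancy is the term `n = 0`, which
`P_m[θ,φ]` keeps and `P_1^{θ,φ}` drops exactly when `λ = 0` and `θ ≠ 1`; it equals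
`0^{m-1} / (1 - θ⁻¹) = δ_{1,m} / (1 - θ⁻¹)`.
-/

open Complex Filter

/-- The `n = λ + m` term of the series defining the twisted `P`-type function
`P_1^{θ,φ}(z,τ)`; when `φ = 1` (i.e. `λ = 0`) the term `n = 0` is omitted. -/
noncomputable def Qterm1 (lam : ℝ) (θ : ℂ) (τ z : ℂ) (m : ℤ) : ℂ :=
  if lam = 0 ∧ m = 0 then 0
  else qpow z (lam + (m : ℝ)) / (1 - θ⁻¹ * qpow τ (lam + (m : ℝ)))

/-- The twisted `P`-type function `P_1^{θ,φ}(z,τ)`. -/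
noncomputable def twQ1 (lam : ℝ) (θ : ℂ) (τ z : ℂ) : ℂ :=
  2 * Real.pi * Complex.I * ∑' m : ℤ, Qterm1 lam θ τ z m

/-- The higher twisted `P`-type function
`P_m^{θ,φ}(z,τ) = (1/(m−1)!) (∂/∂z)^{m−1} P_1^{θ,φ}(z,τ)` (for `m = 1` this is
`P_1^{θ,φ}` itself). -/
noncomputable def twQ (m : ℕ) (lam : ℝ) (θ : ℂ) (τ z : ℂ) : ℂ :=
  (1 / (Nat.factorial (m - 1) : ℂ)) *
    iteratedDeriv (m - 1) (fun w : ℂ => twQ1 lam θ τ w) z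

open scoped Real Topology

lemma norm_qpow_s5 (w : ℂ) (x : ℝ) : ‖qpow w x‖ = Real.exp (-(2 * π * x * w.im)) := by
  rw [qpow, norm_exp]
  congr 1
  simp [mul_re, mul_im]

lemma reg_iff {τ z : ℂ} : Reg τ z ↔ 0 < z.im ∧ z.im < τ.im := by
  have h_qq (w : ℂ) : ‖qq w‖ = Real.exp (-(2 * π * w.im)) := by
    simpa [qpow, qq] using norm_qpow_s5 w 1
  rw [Reg, h_qq, h_qq, ← Real.exp_zero, Real.exp_lt_exp, Real.exp_lt_exp]
  constructor <;> rintro ⟨h₁, h₂⟩ <;> constructor <;> nlinarith [Real.pi_pos]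

lemma norm_qpow_le_add {a b : ℝ} {w : ℂ} (ha : a ≤ w.im) (hb : w.im ≤ b) (x : ℝ) :
    ‖qpow w x‖ ≤ Real.exp (-(2 * π * x * a)) + Real.exp (-(2 * π * x * b)) := by
  rw [norm_qpow_s5]
  rcases le_total 0 x with hx | hx
  · refine le_add_of_le_of_nonneg (Real.exp_le_exp.2 ?_) (Real.exp_nonneg _)
    nlinarith [Real.pi_pos, mul_le_mul_of_nonneg_left ha hx]
  · refine le_add_of_nonneg_of_le (Real.exp_nonneg _) (Real.exp_le_exp.2 ?_)
    nlinarith [Real.pi_pos, mul_le_mul_of_nonpos_left hb hx]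

section OneSub

variable {𝕜 : Type*} [NormedDivisionRing 𝕜] {q : 𝕜}

lemma inv_norm_one_sub_le_two (hq : ‖q‖ ≤ 1 / 2) : ‖1 - q‖⁻¹ ≤ 2 := by
  have h : 1 / 2 ≤ ‖1 - q‖ := by
    linarith [norm_one (α := 𝕜) ▸ norm_sub_norm_le (1 : 𝕜) q]
  calc ‖1 - q‖⁻¹ ≤ (1 / 2)⁻¹ := inv_anti₀ (by norm_num) h
    _ = 2 := by norm_num

lemma inv_norm_one_sub_le_of_two_le (hq : 2 ≤ ‖q‖) : ‖1 - q‖⁻¹ ≤ 2 * ‖q‖⁻¹ := by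
  have h : ‖q‖ / 2 ≤ ‖1 - q‖ := by
    linarith [norm_one (α := 𝕜) ▸ norm_sub_rev q 1 ▸ norm_sub_norm_le q (1 : 𝕜)]
  calc ‖1 - q‖⁻¹ ≤ (‖q‖ / 2)⁻¹ := inv_anti₀ (by linarith) h
    _ = 2 * ‖q‖⁻¹ := by rw [inv_div, div_eq_mul_inv]

end OneSub

lemma summable_exp_neg_mul_abs_int {d : ℝ} (hd : 0 < d) :
    Summable fun n : ℤ => Real.exp (-(d * |(n : ℝ)|)) := by
  have h_nat : Summable fun n : ℕ => Real.exp (-(d * n)) := by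
    simpa [← Real.exp_nat_mul, mul_comm] using
      summable_geometric_of_lt_one (Real.exp_nonneg (-d)) (Real.exp_lt_one_iff.2 (by linarith))
  exact .of_nat_of_neg (by simpa using h_nat) (by simpa using h_nat)

lemma pow_abs_mul_exp_neg_le {c : ℝ} (hc : 0 < c) (k : ℕ) (y : ℝ) :
    |y| ^ k * Real.exp (-(c * |y|)) ≤ k.factorial * (2 / c) ^ k * Real.exp (-(c / 2 * |y|)) := by
  have h := Real.pow_div_factorial_le_exp (c / 2 * |y|) (by positivity) k
  rw [div_le_iff₀ (by positivity)] at h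
  set t := c / 2 * |y| with ht
  have h_pow : |y| ^ k = (2 / c) ^ k * t ^ k := by
    rw [← mul_pow, ht]; field_simp
  have h_exp : Real.exp (-(c * |y|)) = Real.exp (-t) * Real.exp (-t) := by
    rw [← Real.exp_add, ht]; ring_nf
  calc |y| ^ k * Real.exp (-(c * |y|))
      = (2 / c) ^ k * (t ^ k * Real.exp (-t)) * Real.exp (-t) := by
        rw [h_pow, h_exp]; ring
    _ ≤ (2 / c) ^ k * (Real.exp t * k.factorial * Real.exp (-t)) * Real.exp (-t) := by gcongr
    _ = k.factorial * (2 / c) ^ k * Real.exp (-t) := by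
        rw [Real.exp_neg]; field_simp

lemma summable_pow_abs_add_mul_exp_neg (lam : ℝ) {c : ℝ} (hc : 0 < c) (k : ℕ) :
    Summable fun n : ℤ => |lam + n| ^ k * Real.exp (-(c * |lam + n|)) := by
  refine (((summable_exp_neg_mul_abs_int (half_pos hc)).mul_left
    (k.factorial * (2 / c) ^ k * Real.exp (c / 2 * |lam|)))).of_nonneg_of_le
    (fun n => by positivity) (fun n => (pow_abs_mul_exp_neg_le hc k _).trans ?_)
  rw [mul_assoc (_ * _), ← Real.exp_add]
  gcongr
  have h : |(n : ℝ)| ≤ |lam + n| + |lam| := by simpa using abs_sub (lam + n) lam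
  nlinarith

lemma tendsto_add_intCast_cofinite (lam : ℝ) :
    Tendsto (fun n : ℤ => lam + n) cofinite (atBot ⊔ atTop) := by
  rw [Int.cofinite_eq]
  exact (tendsto_atBot_add_const_left _ lam (tendsto_intCast_atBot_iff.2 tendsto_id)).sup_sup
    (tendsto_atTop_add_const_left _ lam (tendsto_intCast_atTop_iff.2 tendsto_id))

section Majorant

variable {θ τ : ℂ} {a b : ℝ}

noncomputable def stripMajorant (θ τ : ℂ) (a b x : ℝ) : ℝ :=
  (Real.exp (-(2 * π * x * a)) + Real.exp (-(2 * π * x * b))) * ‖1 - θ⁻¹ * qpow τ x‖⁻¹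

lemma stripMajorant_nonneg (θ τ : ℂ) (a b x : ℝ) : 0 ≤ stripMajorant θ τ a b x := by
  unfold stripMajorant; positivity

lemma norm_inv_mul_qpow (θ τ : ℂ) (x : ℝ) :
    ‖θ⁻¹ * qpow τ x‖ = ‖θ‖⁻¹ * Real.exp (-(2 * π * τ.im * x)) := by
  rw [norm_mul, norm_inv, norm_qpow_s5, mul_right_comm (2 * π)]

lemma stripMajorant_eventually_le_atTop (hab : a ≤ b) (hτ : 0 < τ.im) :
    ∀ᶠ x in atTop, stripMajorant θ τ a b x ≤ 4 * Real.exp (-(2 * π * x * a)) := by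
  have h_small : Tendsto (fun x : ℝ => ‖θ⁻¹ * qpow τ x‖) atTop (𝓝 0) := by
    simp_rw [norm_inv_mul_qpow]
    simpa using (Real.tendsto_exp_atBot.comp (tendsto_neg_atTop_atBot.comp
      (tendsto_id.const_mul_atTop (by positivity : 0 < 2 * π * τ.im)))).const_mul ‖θ‖⁻¹
  filter_upwards [h_small.eventually (ge_mem_nhds (by norm_num : (0 : ℝ) < 1 / 2)),
    eventually_ge_atTop 0] with x hx hx0
  have h_exp : Real.exp (-(2 * π * x * b)) ≤ Real.exp (-(2 * π * x * a)) :=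
    Real.exp_le_exp.2 (by nlinarith [Real.pi_pos, mul_le_mul_of_nonneg_left hab hx0])
  calc stripMajorant θ τ a b x
      ≤ (Real.exp (-(2 * π * x * a)) + Real.exp (-(2 * π * x * a))) * 2 := by
        unfold stripMajorant
        gcongr
        exact inv_norm_one_sub_le_two hx
    _ = 4 * Real.exp (-(2 * π * x * a)) := by ring

lemma stripMajorant_eventually_le_atBot (hθ : θ ≠ 0) (hab : a ≤ b) (hτ : 0 < τ.im) :
    ∀ᶠ x in atBot, stripMajorant θ τ a b x ≤ 4 * ‖θ‖ * Real.exp (2 * π * (τ.im - b) * x) := by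
  have h_large : Tendsto (fun x : ℝ => ‖θ⁻¹ * qpow τ x‖) atBot atTop := by
    simp_rw [norm_inv_mul_qpow]
    exact (Real.tendsto_exp_atTop.comp (tendsto_neg_atBot_atTop.comp
      (tendsto_id.const_mul_atBot (by positivity : 0 < 2 * π * τ.im)))).const_mul_atTop
      (by positivity)
  filter_upwards [h_large.eventually_ge_atTop 2, eventually_le_atBot 0] with x hx hx0
  have h_exp : Real.exp (-(2 * π * x * a)) ≤ Real.exp (-(2 * π * x * b)) :=
    Real.exp_le_exp.2 (by nlinarith [Real.pi_pos, mul_le_mul_of_nonpos_left hab hx0])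
  calc stripMajorant θ τ a b x
      ≤ (Real.exp (-(2 * π * x * b)) + Real.exp (-(2 * π * x * b))) *
          (2 * ‖θ⁻¹ * qpow τ x‖⁻¹) := by
        unfold stripMajorant
        gcongr
        exact inv_norm_one_sub_le_of_two_le hx
    _ = 4 * ‖θ‖ * Real.exp (2 * π * (τ.im - b) * x) := by
        rw [norm_inv_mul_qpow, mul_inv, inv_inv, ← Real.exp_neg,
          show 2 * π * (τ.im - b) * x = -(2 * π * x * b) + -(-(2 * π * τ.im * x)) by ring,
          Real.exp_add]
        ring

lemma stripMajorant_eventually_le_exp (hθ : θ ≠ 0) (ha : 0 < a) (hab : a ≤ b) (hb : b < τ.im) :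
    ∃ C c : ℝ, 0 < c ∧
      ∀ᶠ x in atBot ⊔ atTop, stripMajorant θ τ a b x ≤ C * Real.exp (-(c * |x|)) := by
  have hτ : 0 < τ.im := by linarith
  set c := 2 * π * min a (τ.im - b)
  refine ⟨4 * (1 + ‖θ‖), c, by positivity, eventually_sup.2 ⟨?_, ?_⟩⟩
  · filter_upwards [stripMajorant_eventually_le_atBot hθ hab hτ, eventually_le_atBot 0]
      with x hx hx0
    have hc : c ≤ 2 * π * (τ.im - b) :=
      mul_le_mul_of_nonneg_left (min_le_right _ _) (by positivity)
    have h_exp : Real.exp (2 * π * (τ.im - b) * x) ≤ Real.exp (-(c * |x|)) :=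
      Real.exp_le_exp.2 (by rw [abs_of_nonpos hx0]; nlinarith)
    exact hx.trans (mul_le_mul (by linarith [norm_nonneg θ]) h_exp (by positivity) (by positivity))
  · filter_upwards [stripMajorant_eventually_le_atTop (θ := θ) hab hτ, eventually_ge_atTop 0]
      with x hx hx0
    have hc : c ≤ 2 * π * a := mul_le_mul_of_nonneg_left (min_le_left _ _) (by positivity)
    have h_exp : Real.exp (-(2 * π * x * a)) ≤ Real.exp (-(c * |x|)) :=
      Real.exp_le_exp.2 (by rw [abs_of_nonneg hx0]; nlinarith)
    exact hx.trans (mul_le_mul (by linarith [norm_nonneg θ]) h_exp (by positivity) (by positivity))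

lemma summable_pow_abs_mul_stripMajorant (hθ : θ ≠ 0) (ha : 0 < a) (hab : a ≤ b) (hb : b < τ.im)
    (lam : ℝ) (k : ℕ) :
    Summable fun n : ℤ => |lam + n| ^ k * stripMajorant θ τ a b (lam + n) := by
  obtain ⟨C, c, hc, h_le⟩ := stripMajorant_eventually_le_exp hθ ha hab hb
  refine ((summable_pow_abs_add_mul_exp_neg lam hc k).mul_left C).of_norm_bounded_eventually ?_
  filter_upwards [tendsto_add_intCast_cofinite lam h_le] with n hn
  rw [Real.norm_of_nonneg (mul_nonneg (by positivity) (stripMajorant_nonneg θ τ a b _))]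
  calc |lam + n| ^ k * stripMajorant θ τ a b (lam + n)
      ≤ |lam + n| ^ k * (C * Real.exp (-(c * |lam + n|))) := by gcongr; exact hn
    _ = C * (|lam + n| ^ k * Real.exp (-(c * |lam + n|))) := by ring

end Majorant

section Series

variable {lam : ℝ} {θ τ : ℂ}

noncomputable def Qterm (k : ℕ) (lam : ℝ) (θ τ z : ℂ) (n : ℤ) : ℂ :=
  ((lam + n : ℝ) : ℂ) ^ k * Qterm1 lam θ τ z n

lemma hasDerivAt_Qterm (k : ℕ) (n : ℤ) (w : ℂ) :
    HasDerivAt (fun w => Qterm k lam θ τ w n) (2 * π * I * Qterm (k + 1) lam θ τ w n) w := by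
  by_cases h : lam = 0 ∧ n = 0
  · simpa [Qterm, Qterm1, h] using hasDerivAt_const w (0 : ℂ)
  · simp only [Qterm, Qterm1, if_neg h]
    have h_exp := ((hasDerivAt_id' w).const_mul (2 * π * I * (lam + n : ℝ))).cexp
    exact ((h_exp.div_const (1 - θ⁻¹ * qpow τ (lam + n))).const_mul
      (((lam + n : ℝ) : ℂ) ^ k)).congr_deriv (by unfold qpow; ring)

lemma norm_Qterm_le {a b : ℝ} {w : ℂ} (ha : a ≤ w.im) (hb : w.im ≤ b) (k : ℕ) (n : ℤ) :
    ‖Qterm k lam θ τ w n‖ ≤ |lam + n| ^ k * stripMajorant θ τ a b (lam + n) := by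
  by_cases h : lam = 0 ∧ n = 0
  · rw [Qterm, Qterm1, if_pos h, mul_zero, norm_zero]
    exact mul_nonneg (by positivity) (stripMajorant_nonneg θ τ a b _)
  · rw [Qterm, Qterm1, if_neg h, norm_mul, norm_pow, norm_real, Real.norm_eq_abs, norm_div,
      div_eq_mul_inv, stripMajorant]
    gcongr
    exact norm_qpow_le_add ha hb _

lemma exists_summable_bound_Qterm (hθ : θ ≠ 0) (k : ℕ) {z : ℂ} (hz₀ : 0 < z.im)
    (hzτ : z.im < τ.im) :
    ∃ U : Set ℂ, IsOpen U ∧ z ∈ U ∧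
      ∃ u : ℤ → ℝ, Summable u ∧ ∀ n, ∀ w ∈ U, ‖Qterm k lam θ τ w n‖ ≤ u n :=
  ⟨im ⁻¹' Set.Ioo (z.im / 2) ((z.im + τ.im) / 2), isOpen_Ioo.preimage continuous_im,
    ⟨by linarith, by linarith⟩, _,
    summable_pow_abs_mul_stripMajorant hθ (by linarith) (by linarith) (by linarith) lam k,
    fun n _ hw => norm_Qterm_le hw.1.le hw.2.le k n⟩

lemma summable_Qterm (hθ : θ ≠ 0) (k : ℕ) {z : ℂ} (hz₀ : 0 < z.im) (hzτ : z.im < τ.im) :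
    Summable (Qterm k lam θ τ z) := by
  obtain ⟨U, -, hzU, u, hu, h_le⟩ := exists_summable_bound_Qterm (lam := lam) hθ k hz₀ hzτ
  exact .of_norm_bounded hu fun n => h_le n z hzU

theorem iteratedDeriv_twQ1 (hθ : θ ≠ 0) (k : ℕ) {z : ℂ} (hz₀ : 0 < z.im) (hzτ : z.im < τ.im) :
    iteratedDeriv k (fun w => twQ1 lam θ τ w) z
      = (2 * π * I) ^ (k + 1) * ∑' n, Qterm k lam θ τ z n := by
  induction k generalizing z with
  | zero => simp [twQ1, Qterm]
  | succ k ih =>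
    have h_eq : iteratedDeriv k (fun w => twQ1 lam θ τ w)
        =ᶠ[𝓝 z] fun w => (2 * π * I) ^ (k + 1) * ∑' n, Qterm k lam θ τ w n :=
      eventually_of_mem ((isOpen_Ioo.preimage continuous_im).mem_nhds ⟨hz₀, hzτ⟩)
        fun w hw => ih hw.1 hw.2
    obtain ⟨U, hU, hzU, u, hu, h_le⟩ := exists_summable_bound_Qterm (lam := lam) hθ k hz₀ hzτ
    have h_sum := hasSum_deriv_of_summable_norm hu
      (fun n w _ => (hasDerivAt_Qterm k n w).differentiableAt.differentiableWithinAt)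
      hU h_le hzU
    rw [iteratedDeriv_succ, h_eq.deriv_eq, deriv_const_mul_field, ← h_sum.tsum_eq,
      tsum_congr fun n => (hasDerivAt_Qterm k n z).deriv, tsum_mul_left]
    ring

lemma Pterm_eq_Qterm_add (k : ℕ) (z : ℂ) (n : ℤ) :
    Pterm k lam θ τ z n = Qterm (k - 1) lam θ τ z n +
      if n = 0 then (if lam = 0 ∧ θ ≠ 1 then 0 ^ (k - 1) / (1 - θ⁻¹) else 0) else 0 := by
  by_cases h : lam = 0 ∧ n = 0
  · obtain ⟨rfl, rfl⟩ := h
    by_cases hθ : θ = 1 <;> simp [Pterm, Qterm, Qterm1, qpow, hθ]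
  · have h' : ¬(lam = 0 ∧ θ = 1 ∧ n = 0) := fun h'' => h ⟨h''.1, h''.2.2⟩
    rw [Pterm, Qterm, Qterm1, if_neg h, if_neg h', mul_div_assoc, left_eq_add, ite_eq_right_iff]
    rintro rfl
    exact if_neg fun h₁ => h ⟨h₁.1, rfl⟩

lemma tsum_Pterm (k : ℕ) {z : ℂ} (hs : Summable (Qterm (k - 1) lam θ τ z)) :
    ∑' n, Pterm k lam θ τ z n = ∑' n, Qterm (k - 1) lam θ τ z n +
      if lam = 0 ∧ θ ≠ 1 then 0 ^ (k - 1) / (1 - θ⁻¹) else 0 := by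
  rw [tsum_congr (Pterm_eq_Qterm_add k z), hs.tsum_add (hasSum_ite_eq 0 _).summable, tsum_ite_eq]

end Series

theorem twistedPtype_higher_vs_twistedWeierstrass_general
    (m : ℕ) (hm : 1 ≤ m) (lam : ℝ)
    (θ : ℂ) (hθ : θ ≠ 0) (τ : ℂ)
    (z : ℂ) (hz : Reg τ z) :
    (lam = 0 → θ ≠ 1 →
      twQ m lam θ τ z = (-1 : ℂ) ^ m * twP m lam θ τ z -
        (if m = 1 then 2 * Real.pi * Complex.I / (1 - θ⁻¹) else 0)) ∧
    (¬(lam = 0 ∧ θ ≠ 1) → twQ m lam θ τ z = (-1 : ℂ) ^ m * twP m lam θ τ z) := by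
  obtain ⟨hz₀, hzτ⟩ := reg_iff.1 hz
  have hQ : twQ m lam θ τ z
      = (2 * π * I) ^ m / (m - 1).factorial * ∑' n, Qterm (m - 1) lam θ τ z n := by
    rw [twQ, iteratedDeriv_twQ1 hθ (m - 1) hz₀ hzτ, Nat.sub_add_cancel hm]
    ring
  have hP : (-1 : ℂ) ^ m * twP m lam θ τ z
      = (2 * π * I) ^ m / (m - 1).factorial * (∑' n, Qterm (m - 1) lam θ τ z n +
        if lam = 0 ∧ θ ≠ 1 then 0 ^ (m - 1) / (1 - θ⁻¹) else 0) := by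
    rw [twP, tsum_Pterm m (summable_Qterm hθ (m - 1) hz₀ hzτ), ← mul_assoc, ← mul_div_assoc,
      ← mul_pow, neg_one_mul, neg_neg]
  refine ⟨fun hlam hθ₁ => ?_, fun h => ?_⟩
  · rw [hQ, hP, if_pos ⟨hlam, hθ₁⟩]
    rcases eq_or_ne m 1 with rfl | hm₁
    · simp only [if_pos, Nat.sub_self, pow_zero, pow_one, Nat.factorial_zero, Nat.cast_one,
        div_one]
      ring
    · rw [if_neg hm₁, zero_pow (by omega), zero_div, add_zero, sub_zero]
  · rw [hQ, hP, if_neg h, add_zero]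

/-- For every integer `m ≥ 1` and every `z` with `|q_τ| < |q_z| < 1`:
if `φ = 1` (i.e. `λ = 0`) and `θ ≠ 1` then
`P_m^{θ,φ}(z,τ) = (−1)^m P_m[θ,φ](z,τ) − δ_{1,m}·2πi/(1 − θ⁻¹)`, while in all other
cases `P_m^{θ,φ}(z,τ) = (−1)^m P_m[θ,φ](z,τ)`. -/
theorem twistedPtype_higher_vs_twistedWeierstrass
    (m : ℕ) (hm : 1 ≤ m) (lam : ℝ) (hlam : lam ∈ Set.Ico (0:ℝ) 1)
    (θ : ℂ) (hθ : θ ≠ 0) (τ : ℂ) (hτ : 0 < τ.im)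
    (hden : ∀ j : ℤ, ¬(lam = 0 ∧ θ = 1 ∧ j = 0) →
      1 - θ⁻¹ * qpow τ (lam + (j : ℝ)) ≠ 0)
    (z : ℂ) (hz : Reg τ z) :
    (lam = 0 → θ ≠ 1 →
      twQ m lam θ τ z = (-1 : ℂ) ^ m * twP m lam θ τ z -
        (if m = 1 then 2 * Real.pi * Complex.I / (1 - θ⁻¹) else 0)) ∧
    (¬(lam = 0 ∧ θ ≠ 1) → twQ m lam θ τ z = (-1 : ℂ) ^ m * twP m lam θ τ z) :=
  twistedPtype_higher_vs_twistedWeierstrass_general m hm lam θ hθ τ z hz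
end
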